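/- (Ptolemaean inequality in ∂𝐇²_ℂ, second inequality) Let p₁, p₂, p₃, p₄ ∈ ℂ³ be nonzero null vectors (⟨pᵢ,pᵢ⟩ = 0) whose pairwise Hermitian pairings are nonzero (⟨pᵢ,pⱼ⟩ ≠ 0 for i ≠ j). Setting 𝕏₁ = 𝕏(p₁,p₂,p₃,p₄) and 𝕏₂ = 𝕏(p₁,p₃,p₂,p₄), one has −1 ≤ |𝕏₁|^{1/2} − |𝕏₂|^{1/2} ≤ 1. -/

import Mathlib

/-!
For null vectors the Gram matrix `gᵢⱼ = ⟨pᵢ, pⱼ⟩` is a Hermitian `4 × 4` matrix with zero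
diagonal, and it is singular because the vectors live in `ℂ³`. Expanding its determinant over
the derangements of four points and taking real parts gives
`A² + B² + C² = 2 Σ Re(4-cycle products) ≤ 2 (AB + BC + CA)` for
`A = |g₀₂||g₁₃|`, `B = |g₀₁||g₂₃|`, `C = |g₀₃||g₁₂|`, i.e. `√A, √B, √C` satisfy the triangle
inequality. Since `|𝕏₁| = A / C` and `|𝕏₂| = B / C`, this is `|√|𝕏₁| - √|𝕏₂|| ≤ 1`.
-/

/-- The Hermitian form of signature (2,1) on ℂ³:
`⟨z,w⟩ = z₁·conj(w₃) + z₂·conj(w₂) + z₃·conj(w₁)`. -/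
noncomputable def herm (z w : Fin 3 → ℂ) : ℂ :=
  z 0 * starRingEnd ℂ (w 2) + z 1 * starRingEnd ℂ (w 1) + z 2 * starRingEnd ℂ (w 0)

/-- The Korányi–Reimann complex cross-ratio. -/
noncomputable def crossRatio (p₁ p₂ p₃ p₄ : Fin 3 → ℂ) : ℂ :=
  (herm p₃ p₁ * herm p₄ p₂) / (herm p₄ p₁ * herm p₃ p₂)

open ComplexConjugate

theorem abs_sqrt_sub_sqrt_le_sqrt {A B C : ℝ} (hA : 0 ≤ A) (hB : 0 ≤ B) (hC : 0 ≤ C)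
    (h : A ^ 2 + B ^ 2 + C ^ 2 ≤ 2 * (A * B + B * C + C * A)) : |√A - √B| ≤ √C := by
  -- `2 Σ a²b² - Σ a⁴ = (a + b + c)(-a + b + c)(a - b + c)(a + b - c)`
  have side : ∀ {a b : ℝ}, 0 ≤ b → (a ^ 2) ^ 2 + (b ^ 2) ^ 2 + (√C ^ 2) ^ 2
      ≤ 2 * (a ^ 2 * b ^ 2 + b ^ 2 * √C ^ 2 + √C ^ 2 * a ^ 2) → a - b ≤ √C := by
    intro a b hb hab
    by_contra! hlt
    have hc := Real.sqrt_nonneg C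
    nlinarith [mul_pos (mul_pos (mul_pos (by linarith : 0 < a + b + √C)
      (by linarith : 0 < a - b - √C)) (by linarith : 0 < a - b + √C))
      (by linarith : 0 < a + b - √C)]
  rw [← Real.sq_sqrt hA, ← Real.sq_sqrt hB, ← Real.sq_sqrt hC] at h
  exact abs_sub_le_iff.2 ⟨side (Real.sqrt_nonneg B) h, side (Real.sqrt_nonneg A) (by linarith)⟩

theorem abs_sqrt_div_sub_sqrt_div_le_one {A B C : ℝ} (hA : 0 ≤ A) (hB : 0 ≤ B) (hC : 0 ≤ C)
    (h : A ^ 2 + B ^ 2 + C ^ 2 ≤ 2 * (A * B + B * C + C * A)) :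
    |√(A / C) - √(B / C)| ≤ 1 := by
  -- for `C = 0` both quotients are the junk value `0`, and `div_le_one_of_le₀` allows that
  rw [Real.sqrt_div hA, Real.sqrt_div hB, ← sub_div, abs_div,
    abs_of_nonneg (Real.sqrt_nonneg C)]
  exact div_le_one_of_le₀ (abs_sqrt_sub_sqrt_le_sqrt hA hB hC h) (Real.sqrt_nonneg C)

namespace Matrix

theorem det_mul_eq_zero_of_card_lt {m n K : Type*} [Fintype m] [Fintype n] [DecidableEq m]
    [Field K] (A : Matrix m n K) (B : Matrix n m K) (h : Fintype.card n < Fintype.card m) :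
    (A * B).det = 0 := by
  by_contra hdet
  have hrank := (A * B).rank_of_isUnit ((isUnit_iff_isUnit_det _).2 (Ne.isUnit hdet))
  have := (A.rank_mul_le_left B).trans A.rank_le_card_width
  omega

theorem det_fin_four_of_diag_eq_zero {R : Type*} [CommRing R] (g : Matrix (Fin 4) (Fin 4) R)
    (hdiag : ∀ i, g i i = 0) :
    g.det = g 0 1 * g 1 0 * (g 2 3 * g 3 2) + g 0 2 * g 2 0 * (g 1 3 * g 3 1)
      + g 0 3 * g 3 0 * (g 1 2 * g 2 1)
      - (g 0 1 * g 1 2 * g 2 3 * g 3 0 + g 0 3 * g 3 2 * g 2 1 * g 1 0)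
      - (g 0 1 * g 1 3 * g 3 2 * g 2 0 + g 0 2 * g 2 3 * g 3 1 * g 1 0)
      - (g 0 2 * g 2 1 * g 1 3 * g 3 0 + g 0 3 * g 3 1 * g 1 2 * g 2 0) := by
  simp [det_succ_row_zero, Fin.sum_univ_succ, hdiag, Fin.succAbove]
  ring

theorem IsHermitian.sq_add_sq_add_sq_le_of_det_eq_zero {g : Matrix (Fin 4) (Fin 4) ℂ}
    (hg : g.IsHermitian) (hdiag : ∀ i, g i i = 0) (hdet : g.det = 0) {A B C : ℝ}
    (hA : A = ‖g 0 2‖ * ‖g 1 3‖) (hB : B = ‖g 0 1‖ * ‖g 2 3‖) (hC : C = ‖g 0 3‖ * ‖g 1 2‖) :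
    A ^ 2 + B ^ 2 + C ^ 2 ≤ 2 * (A * B + B * C + C * A) := by
  have hsymm : ∀ i j, g j i = conj (g i j) := fun i j => (hg.apply j i).symm
  have hnorm : ∀ i j, ‖g j i‖ = ‖g i j‖ := fun i j => by rw [hsymm, Complex.norm_conj]
  have hpair : ∀ i j, g i j * g j i = (‖g i j‖ ^ 2 : ℝ) := fun i j => by
    rw [hsymm i j, Complex.mul_conj', Complex.ofReal_pow]
  have hcycle : ∀ i j k l, g i j * g j k * g k l * g l i + g i l * g l k * g k j * g j i
      = (2 * (g i j * g j k * g k l * g l i).re : ℝ) := fun i j k l => by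
    rw [show g i l * g l k * g k j * g j i = conj (g i j * g j k * g k l * g l i) by
      simp only [map_mul, ← hsymm]; ring, Complex.add_conj]
  have hre : ∀ i j k l,
      (g i j * g j k * g k l * g l i).re ≤ ‖g i j‖ * ‖g j k‖ * ‖g k l‖ * ‖g l i‖ :=
    fun i j k l => (Complex.re_le_norm _).trans_eq (by simp only [norm_mul])
  have hid := (g.det_fin_four_of_diag_eq_zero hdiag).symm.trans hdet
  rw [hpair, hpair, hpair, hpair, hpair, hpair, hcycle, hcycle, hcycle] at hid
  norm_cast at hid
  have h₁ := hre 0 1 2 3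
  have h₂ := hre 0 1 3 2
  have h₃ := hre 0 2 1 3
  rw [hnorm 0 3] at h₁ h₃
  rw [hnorm 0 2, hnorm 2 3] at h₂
  rw [hnorm 1 2] at h₃
  subst hA hB hC
  linarith

end Matrix

theorem herm_conj_symm (z w : Fin 3 → ℂ) : conj (herm w z) = herm z w := by
  simp only [herm, map_add, map_mul, Complex.conj_conj]
  ring

theorem norm_herm_symm (z w : Fin 3 → ℂ) : ‖herm w z‖ = ‖herm z w‖ := by
  rw [← herm_conj_symm, Complex.norm_conj]

theorem norm_crossRatio (p₁ p₂ p₃ p₄ : Fin 3 → ℂ) :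
    ‖crossRatio p₁ p₂ p₃ p₄‖
      = ‖herm p₁ p₃‖ * ‖herm p₂ p₄‖ / (‖herm p₁ p₄‖ * ‖herm p₂ p₃‖) := by
  rw [crossRatio, norm_div, norm_mul, norm_mul, norm_herm_symm p₁ p₃, norm_herm_symm p₂ p₄,
    norm_herm_symm p₁ p₄, norm_herm_symm p₂ p₃]

noncomputable def hermGram {ι : Type*} (p : ι → Fin 3 → ℂ) : Matrix ι ι ℂ :=
  Matrix.of fun i j => herm (p i) (p j)

theorem isHermitian_hermGram {ι : Type*} (p : ι → Fin 3 → ℂ) : (hermGram p).IsHermitian :=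
  Matrix.ext fun i j => herm_conj_symm (p i) (p j)

theorem hermGram_eq_mul {ι : Type*} (p : ι → Fin 3 → ℂ) :
    hermGram p = (Matrix.of p : Matrix ι (Fin 3) ℂ)
      * (Matrix.of fun k j => conj (p j k.rev) : Matrix (Fin 3) ι ℂ) := by
  ext i j
  simp [hermGram, herm, Matrix.mul_apply, Fin.sum_univ_three]

theorem det_hermGram_eq_zero {ι : Type*} [Fintype ι] [DecidableEq ι] (p : ι → Fin 3 → ℂ)
    (hι : 3 < Fintype.card ι) : (hermGram p).det = 0 := by
  rw [hermGram_eq_mul]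
  exact Matrix.det_mul_eq_zero_of_card_lt _ _ (by simpa using hι)

theorem ptolemaean_inequality_boundary_second_general
    (p : Fin 4 → Fin 3 → ℂ)
    (hnull : ∀ i, herm (p i) (p i) = 0) :
    -1 ≤ Real.sqrt (‖crossRatio (p 0) (p 1) (p 2) (p 3)‖)
        - Real.sqrt (‖crossRatio (p 0) (p 2) (p 1) (p 3)‖)
    ∧ Real.sqrt (‖crossRatio (p 0) (p 1) (p 2) (p 3)‖)
        - Real.sqrt (‖crossRatio (p 0) (p 2) (p 1) (p 3)‖) ≤ 1 := by
  have hquad := (isHermitian_hermGram p).sq_add_sq_add_sq_le_of_det_eq_zero hnull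
    (det_hermGram_eq_zero p (by simp)) rfl rfl rfl
  rw [norm_crossRatio, norm_crossRatio, norm_herm_symm (p 1) (p 2)]
  exact abs_le.1 (abs_sqrt_div_sub_sqrt_div_le_one (by positivity) (by positivity)
    (by positivity) hquad)

theorem ptolemaean_inequality_boundary_second
    (p : Fin 4 → Fin 3 → ℂ)
    (hne : ∀ i, p i ≠ 0)
    (hnull : ∀ i, herm (p i) (p i) = 0)
    (hpair : ∀ i j, i ≠ j → herm (p i) (p j) ≠ 0) :
    -1 ≤ Real.sqrt (‖crossRatio (p 0) (p 1) (p 2) (p 3)‖)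
        - Real.sqrt (‖crossRatio (p 0) (p 2) (p 1) (p 3)‖)
    ∧ Real.sqrt (‖crossRatio (p 0) (p 1) (p 2) (p 3)‖)
        - Real.sqrt (‖crossRatio (p 0) (p 2) (p 1) (p 3)‖) ≤ 1 :=
  ptolemaean_inequality_boundary_second_general p hnull
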